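/- Let (Aₙ) be a sequence of unital C*-algebras each having property (P1). Then the ℓ∞-product l^∞({Aₙ}) = { (aₙ) : aₙ ∈ Aₙ, sup ‖aₙ‖ < ∞ } also has property (P1). -/

import Mathlib

open scoped ENNReal MultiplierAlgebra

/-- An element `b` of a topological ring is *full* if the closure of the two-sided ideal
it generates is the whole ring. -/
def IsFullIn {A : Type*} [NonUnitalNonAssocRing A] [TopologicalSpace A] (b : A) : Prop :=
  closure ((TwoSidedIdeal.span {b} : TwoSidedIdeal A) : Set A) = Set.univ

/-- Property (P1): every full element `b` admits `x, y` with `x * b * y = 1`. -/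
def PropP1 (B : Type*) [Ring B] [TopologicalSpace B] : Prop :=
  ∀ b : B, IsFullIn b → ∃ x y : B, x * b * y = 1

/-- The piecewise-linear function `f_n` : `0` on `[0, 1/(n+1)]`, `1` on `[1/n, ∞)`,
linear in between. -/
noncomputable def fcut (n : ℕ) (t : ℝ) : ℝ := min 1 (max 0 ((n * (n + 1) : ℝ) * t - n))

/-!
Full elements of a unital Banach algebra form an open set, and an element is full exactly when
the algebraic ideal it generates contains `1`. If `b` is full in `ℓ^∞`, then `b * f_N(b⋆b) → b`,
so `e = f_N(b⋆b)` is full for some `N`, and so is each coordinate `eₙ`.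

Property (P1) gives `xₙ eₙ yₙ = 1` with no control on the norms. It does give `w` with
`w⋆ eₙ w = 1` (`eₙ` is positive), and then `z = eₙ^{1/2} w` is an isometry with
`z⋆ f_{N+1}(c) z = 1`, because `eₙ^{1/2} f_{N+1}(c) eₙ^{1/2} = eₙ` for `c = bₙ⋆bₙ`. Since
`f_{N+1}(t) ≤ (N + 2) t`, this forces `z⋆ c z ≥ 1 / (N + 2)`, so conjugating by its inverse
square root gives `wₙ` with `wₙ⋆ c wₙ = 1` and `‖wₙ‖ ≤ √(N + 2)`: a bound independent of `n`,
which lets the `wₙ` be assembled into an element of `ℓ^∞`.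
-/

open Filter Topology TwoSidedIdeal

@[fun_prop]
lemma continuous_fcut (n : ℕ) : Continuous (fcut n) := by
  unfold fcut; fun_prop

lemma fcut_nonneg (n : ℕ) (t : ℝ) : 0 ≤ fcut n t :=
  le_min zero_le_one (le_max_left _ _)

lemma fcut_eq_one {n : ℕ} (hn : 0 < n) {t : ℝ} (ht : 1 / n ≤ t) : fcut n t = 1 := by
  have hnt : 1 ≤ (n : ℝ) * t := by
    rwa [div_le_iff₀' (by positivity)] at ht
  unfold fcut
  rw [max_eq_right (by nlinarith), min_eq_left (by nlinarith)]

lemma fcut_eq_zero {n : ℕ} {t : ℝ} (ht : t ≤ 1 / (n + 1)) : fcut n t = 0 := by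
  have hnt : ((n : ℝ) + 1) * t ≤ 1 := by
    rwa [le_div_iff₀' (by positivity)] at ht
  unfold fcut
  rw [max_eq_left (by nlinarith [(n.cast_nonneg : (0 : ℝ) ≤ n)]), min_eq_right zero_le_one]

lemma fcut_mul_fcut_succ (n : ℕ) (t : ℝ) : fcut n t * fcut (n + 1) t = fcut n t := by
  rcases le_or_gt t (1 / (n + 1)) with ht | ht
  · rw [fcut_eq_zero ht, zero_mul]
  · rw [fcut_eq_one n.succ_pos (by exact_mod_cast ht.le), mul_one]

lemma fcut_succ_le {n : ℕ} {t : ℝ} (ht : 0 ≤ t) : fcut (n + 1) t ≤ (n + 2) * t := by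
  rcases le_or_gt t (1 / (n + 2)) with ht' | ht'
  · rw [fcut_eq_zero (by push_cast; rwa [add_assoc, one_add_one_eq_two])]; positivity
  · rw [div_lt_iff₀' (by positivity)] at ht'
    exact (min_le_left _ _).trans ht'.le

lemma fcut_sub_one_mul_mul_fcut_sub_one_le {n : ℕ} (hn : 0 < n) {t : ℝ} (ht : 0 ≤ t) :
    (fcut n t - 1) * t * (fcut n t - 1) ≤ 1 / n := by
  rcases le_or_gt (1 / (n : ℝ)) t with ht' | ht'
  · rw [fcut_eq_one hn ht']; simp
  · have h0 := fcut_nonneg n t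
    have h1 : fcut n t ≤ 1 := min_le_left _ _
    have hsq : (fcut n t - 1) ^ 2 ≤ 1 := by nlinarith
    nlinarith [mul_le_mul_of_nonneg_left hsq ht]

lemma TwoSidedIdeal.one_mem_of_isUnit_mem {R : Type*} [Ring R] {I : TwoSidedIdeal R} {z : R}
    (hz : IsUnit z) (hzI : z ∈ I) : (1 : R) ∈ I := by
  obtain ⟨u, rfl⟩ := hz
  simpa using I.mul_mem_left (↑u⁻¹) _ hzI

section Ring

variable {R : Type*} [Ring R] [TopologicalSpace R]

lemma isFullIn_of_one_mem_span {b : R} (h : (1 : R) ∈ span {b}) : IsFullIn b := by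
  rw [IsFullIn, (one_mem_iff _).mp h, coe_top, closure_univ]

lemma IsFullIn.of_mem_span {u e : R} (hu : IsFullIn u) (h : u ∈ span {e}) : IsFullIn e := by
  have hle : span {u} ≤ span {e} := span_le.mpr (Set.singleton_subset_iff.mpr h)
  rw [IsFullIn, ← Set.univ_subset_iff, ← hu]
  exact closure_mono hle

lemma exists_continuous_of_mem_span_singleton [IsTopologicalRing R] {b z : R}
    (hz : z ∈ span {b}) : ∃ Φ : R → R, Continuous Φ ∧ Φ b = z ∧ ∀ c, Φ c ∈ span {c} := by
  induction hz using span_induction with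
  | mem x hx =>
    obtain rfl := Set.mem_singleton_iff.mp hx
    exact ⟨id, continuous_id, rfl, fun c ↦ subset_span rfl⟩
  | zero => exact ⟨0, continuous_const, rfl, fun c ↦ (span {c}).zero_mem⟩
  | add x y _ _ hx hy =>
    obtain ⟨Φ, hΦ, rfl, hΦs⟩ := hx
    obtain ⟨Ψ, hΨ, rfl, hΨs⟩ := hy
    exact ⟨Φ + Ψ, hΦ.add hΨ, rfl, fun c ↦ add_mem _ (hΦs c) (hΨs c)⟩
  | neg x _ hx =>
    obtain ⟨Φ, hΦ, rfl, hΦs⟩ := hx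
    exact ⟨-Φ, hΦ.neg, rfl, fun c ↦ neg_mem _ (hΦs c)⟩
  | left_absorb a x _ hx =>
    obtain ⟨Φ, hΦ, rfl, hΦs⟩ := hx
    exact ⟨(a * Φ ·), continuous_const.mul hΦ, rfl, fun c ↦ mul_mem_left _ _ _ (hΦs c)⟩
  | right_absorb a x _ hx =>
    obtain ⟨Φ, hΦ, rfl, hΦs⟩ := hx
    exact ⟨(Φ · * a), hΦ.mul continuous_const, rfl, fun c ↦ mul_mem_right _ _ _ (hΦs c)⟩

end Ring

section NormedRing

variable {R : Type*} [NormedRing R] [CompleteSpace R]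

lemma IsFullIn.one_mem_span {b : R} (hb : IsFullIn b) : (1 : R) ∈ span {b} := by
  obtain ⟨z, hz, hzI⟩ :=
    mem_closure_iff.mp (hb ▸ Set.mem_univ (1 : R)) _ Units.isOpen isUnit_one
  exact one_mem_of_isUnit_mem hz hzI

lemma isOpen_setOf_isFullIn : IsOpen {b : R | IsFullIn b} := by
  refine isOpen_iff_mem_nhds.mpr fun b hb ↦ ?_
  obtain ⟨Φ, hΦ, hΦb, hΦs⟩ := exists_continuous_of_mem_span_singleton hb.one_mem_span
  filter_upwards [hΦ.continuousAt.preimage_mem_nhds (Units.isOpen.mem_nhds (hΦb ▸ isUnit_one))]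
    with c hc
  exact isFullIn_of_one_mem_span (one_mem_of_isUnit_mem hc (hΦs c))

lemma IsFullIn.map {S : Type*} [Ring S] [TopologicalSpace S] (f : R →+* S) {b : R}
    (hb : IsFullIn b) : IsFullIn (f b) := by
  have hle : span {b} ≤ comap f (span {f b}) :=
    span_le.mpr <| Set.singleton_subset_iff.mpr <| (TwoSidedIdeal.mem_comap f).mpr <|
      subset_span rfl
  exact isFullIn_of_one_mem_span <| by
    simpa [TwoSidedIdeal.mem_comap] using hle hb.one_mem_span

end NormedRing

section CStarAlgebra

variable {C : Type*} [CStarAlgebra C]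

lemma norm_mul_cfc_fcut_sub_le (b : C) {N : ℕ} (hN : 0 < N) :
    ‖b * cfc (fcut N) (star b * b) - b‖ ≤ √(1 / N) := by
  let g := cfc (fun t ↦ fcut N t - 1) (star b * b)
  have hg : b * cfc (fcut N) (star b * b) - b = b * g := by
    change _ = b * cfc (fun t ↦ fcut N t - 1) (star b * b)
    rw [cfc_sub (fcut N) (fun _ ↦ 1) (star b * b), cfc_const_one ℝ (star b * b), mul_sub, mul_one]
  have hgbg : star (b * g) * (b * g) =
      cfc (fun t ↦ (fcut N t - 1) * t * (fcut N t - 1)) (star b * b) := by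
    rw [cfc_mul _ _ (star b * b), cfc_mul _ _ (star b * b), cfc_id' ℝ (star b * b), star_mul,
      (cfc_predicate _ _ : IsSelfAdjoint g).star_eq]
    simp only [mul_assoc]
    rfl
  rw [hg, Real.le_sqrt (norm_nonneg _) (by positivity), sq, ← CStarRing.norm_star_mul_self, hgbg]
  refine norm_cfc_le (by positivity) fun t ht ↦ ?_
  have ht0 := spectrum_star_mul_self_nonneg t ht
  rw [Real.norm_of_nonneg (by nlinarith [mul_nonneg ht0 (sq_nonneg (fcut N t - 1))])]
  exact fcut_sub_one_mul_mul_fcut_sub_one_le hN ht0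

lemma IsFullIn.exists_isFullIn_cfc_fcut {b : C} (hb : IsFullIn b) :
    ∃ N, IsFullIn (cfc (fcut N) (star b * b)) := by
  have hlim : Tendsto (fun N : ℕ ↦ b * cfc (fcut N) (star b * b)) atTop (𝓝 b) := by
    rw [tendsto_iff_norm_sub_tendsto_zero]
    refine squeeze_zero' (Eventually.of_forall fun _ ↦ norm_nonneg _)
      ((eventually_gt_atTop 0).mono fun N hN ↦ norm_mul_cfc_fcut_sub_le b hN) ?_
    have := (Real.continuous_sqrt.tendsto 0).comp tendsto_one_div_atTop_nhds_zero_nat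
    rwa [Real.sqrt_zero] at this
  obtain ⟨N, hN⟩ := (hlim.eventually (isOpen_setOf_isFullIn.mem_nhds hb)).exists
  exact ⟨N, hN.of_mem_span (mul_mem_left _ _ _ (subset_span rfl))⟩

lemma IsFullIn.map_cfc {D : Type*} [CStarAlgebra D] (φ : C →⋆ₐ[ℂ] D) (hφ : Continuous φ)
    {f : ℝ → ℝ} (hf : Continuous f) {a : C} (ha : IsSelfAdjoint a) (h : IsFullIn (cfc f a)) :
    IsFullIn (cfc f (φ a)) := by
  rw [← φ.map_cfc f a]
  exact h.map (φ : C →+* D)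

variable [PartialOrder C] [StarOrderedRing C]

lemma exists_isSelfAdjoint_conj_eq_one_of_one_le {p : C} (h : 1 ≤ p) :
    ∃ t, IsSelfAdjoint t ∧ t * p * t = 1 ∧ ‖t‖ ≤ 1 := by
  have hp : IsSelfAdjoint p := by
    simpa using (IsSelfAdjoint.of_nonneg (sub_nonneg.mpr h)).add (IsSelfAdjoint.one C)
  have hspec : ∀ x ∈ spectrum ℝ p, 1 ≤ x := by
    rw [← algebraMap_le_iff_le_spectrum]; simpa using h
  have hcont : ContinuousOn (fun x : ℝ ↦ (√x)⁻¹) (spectrum ℝ p) :=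
    Real.continuous_sqrt.continuousOn.inv₀ fun x hx ↦ by
      have := hspec x hx; positivity
  refine ⟨cfc (fun x ↦ (√x)⁻¹) p, cfc_predicate _ _, ?_, ?_⟩
  · have hone : cfc (fun x ↦ (√x)⁻¹ * x * (√x)⁻¹) p = 1 := by
      rw [← cfc_const_one ℝ p]
      refine cfc_congr fun x hx ↦ ?_
      have hx1 := hspec x hx
      have hsx : √x * √x = x := Real.mul_self_sqrt (by linarith)
      have hs0 : √x ≠ 0 := by positivity
      field_simp
      rw [sq, hsx]
    rwa [cfc_mul _ _ p, cfc_mul _ _ p, cfc_id' ℝ p] at hone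
  · refine norm_cfc_le zero_le_one fun x hx ↦ ?_
    have := hspec x hx
    rw [norm_inv, Real.norm_of_nonneg (Real.sqrt_nonneg x)]
    exact inv_le_one_of_one_le₀ (Real.one_le_sqrt.mpr this)

lemma exists_isSelfAdjoint_conj_eq_one_of_one_le_smul {q : C} {r : ℝ} (hr : 0 ≤ r)
    (h : 1 ≤ r • q) : ∃ t, IsSelfAdjoint t ∧ t * q * t = 1 ∧ ‖t‖ ≤ √r := by
  obtain ⟨t, ht, htq, ht_norm⟩ := exists_isSelfAdjoint_conj_eq_one_of_one_le h
  refine ⟨√r • t, (IsSelfAdjoint.all _).smul ht, ?_, ?_⟩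
  · rw [← htq, smul_mul_assoc, mul_smul_comm, smul_mul_assoc, smul_smul, Real.mul_self_sqrt hr,
      mul_smul_comm, smul_mul_assoc]
  · rw [norm_smul, Real.norm_of_nonneg (Real.sqrt_nonneg r)]
    exact mul_le_of_le_one_right (Real.sqrt_nonneg r) ht_norm

lemma exists_star_conj_eq_one_of_mul_mul_self_mul_eq_one {s x y : C} (hs : IsSelfAdjoint s)
    (h : x * (s * s) * y = 1) : ∃ w, star w * (s * s) * w = 1 := by
  set g := x * s
  set v := s * y
  have hle : 1 ≤ ‖star g * g‖ • (star v * v) :=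
    calc (1 : C) = star (g * v) * (g * v) := by
          rw [show g * v = 1 by simpa only [g, v, mul_assoc] using h, star_one, one_mul]
      _ = star v * (star g * g) * v := by simp only [star_mul, mul_assoc]
      _ ≤ _ := CStarAlgebra.star_left_conjugate_le_norm_smul (.star_mul_self g)
  obtain ⟨t, ht, hvt, -⟩ := exists_isSelfAdjoint_conj_eq_one_of_one_le_smul (norm_nonneg _) hle
  refine ⟨y * t, ?_⟩
  rw [← hvt]
  simp only [v, star_mul, ht.star_eq, hs.star_eq, mul_assoc]

theorem exists_star_conj_eq_one_of_isFullIn_cfc_fcut (hC : PropP1 C) {c : C} (hc : 0 ≤ c)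
    {N : ℕ} (hfull : IsFullIn (cfc (fcut N) c)) :
    ∃ w, ‖w‖ ≤ √(N + 2) ∧ star w * c * w = 1 := by
  nontriviality C
  set s := cfc (fun t ↦ √(fcut N t)) c
  have hs : IsSelfAdjoint s := cfc_predicate _ _
  have hss : s * s = cfc (fcut N) c := by
    rw [← cfc_mul _ _ c]
    exact cfc_congr fun t _ ↦ Real.mul_self_sqrt (fcut_nonneg N t)
  have hses : s * cfc (fcut (N + 1)) c * s = cfc (fcut N) c := by
    rw [← cfc_mul _ _ c, ← cfc_mul _ _ c]
    refine cfc_congr fun t _ ↦ ?_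
    rw [mul_right_comm, Real.mul_self_sqrt (fcut_nonneg N t), fcut_mul_fcut_succ]
  obtain ⟨x, y, hxy⟩ := hC _ hfull
  obtain ⟨w, hw⟩ := exists_star_conj_eq_one_of_mul_mul_self_mul_eq_one hs (hss ▸ hxy)
  set z := s * w
  have hz : star z * z = 1 := by
    rw [← hw]; simp only [z, star_mul, hs.star_eq, mul_assoc]
  have hz_norm : ‖z‖ ≤ 1 := by
    have : ‖z‖ * ‖z‖ = 1 := by rw [← CStarRing.norm_star_mul_self, hz, norm_one]
    nlinarith [norm_nonneg z]
  have hfcut_le : cfc (fcut (N + 1)) c ≤ ((N : ℝ) + 2) • c := by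
    rw [← cfc_const_mul_id _ c]
    exact cfc_mono fun t ht ↦ fcut_succ_le (spectrum_nonneg_of_nonneg hc ht)
  have hle : 1 ≤ ((N : ℝ) + 2) • (star z * c * z) :=
    calc (1 : C) = star w * (s * cfc (fcut (N + 1)) c * s) * w := by rw [hses, ← hss, hw]
      _ = star z * cfc (fcut (N + 1)) c * z := by simp only [z, star_mul, hs.star_eq, mul_assoc]
      _ ≤ star z * (((N : ℝ) + 2) • c) * z := star_left_conjugate_le_conjugate hfcut_le z
      _ = ((N : ℝ) + 2) • (star z * c * z) := by rw [mul_smul_comm, smul_mul_assoc]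
  obtain ⟨t, ht, hzt, ht_norm⟩ :=
    exists_isSelfAdjoint_conj_eq_one_of_one_le_smul (by positivity) hle
  refine ⟨z * t, ?_, ?_⟩
  · calc ‖z * t‖ ≤ ‖z‖ * ‖t‖ := norm_mul_le _ _
      _ ≤ 1 * √(N + 2) := mul_le_mul hz_norm ht_norm (norm_nonneg _) zero_le_one
      _ = √(N + 2) := one_mul _
  · rw [← hzt, star_mul, ht.star_eq]; simp only [mul_assoc]

end CStarAlgebra

namespace lp

variable {I : Type*} {A : I → Type*} [∀ i, CStarAlgebra (A i)] [∀ i, Nontrivial (A i)]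

noncomputable instance : CStarAlgebra (lp A ∞) where

variable (A) in
noncomputable def evalStarAlgHom (i : I) : lp A ∞ →⋆ₐ[ℂ] A i where
  toFun f := f i
  map_one' := rfl
  map_mul' _ _ := rfl
  map_zero' := rfl
  map_add' _ _ := rfl
  commutes' _ := rfl
  map_star' _ := rfl

@[simp]
lemma evalStarAlgHom_apply (i : I) (f : lp A ∞) : evalStarAlgHom A i f = f i := rfl

lemma continuous_evalStarAlgHom (i : I) : Continuous (evalStarAlgHom A i) :=
  (continuous_apply i).comp uniformContinuous_coe.continuous

end lp

/-- the ℓ∞-product of a sequence of unital C*-algebras with property (P1)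
has property (P1). -/
theorem stmt8 {A : ℕ → Type*} [∀ n, CStarAlgebra (A n)] [∀ n, Nontrivial (A n)]
    (hP1 : ∀ n, PropP1 (A n)) : PropP1 (lp A ∞) := by
  intro b hb
  let (n : ℕ) : PartialOrder (A n) := CStarAlgebra.spectralOrder (A n)
  have (n : ℕ) : StarOrderedRing (A n) := CStarAlgebra.spectralOrderedRing (A n)
  obtain ⟨N, hN⟩ := hb.exists_isFullIn_cfc_fcut
  have hw (n : ℕ) : ∃ w : A n, ‖w‖ ≤ √(N + 2) ∧ star w * (star (b n) * b n) * w = 1 := by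
    refine exists_star_conj_eq_one_of_isFullIn_cfc_fcut (hP1 n) (star_mul_self_nonneg _) ?_
    simpa using hN.map_cfc _ (lp.continuous_evalStarAlgHom n) (continuous_fcut N) (.star_mul_self b)
  choose w hw_norm hw using hw
  let W : lp A ∞ := ⟨w, memℓp_infty ⟨√(N + 2), by rintro _ ⟨n, rfl⟩; exact hw_norm n⟩⟩
  refine ⟨star W * star b, W, lp.ext (funext fun n ↦ ?_)⟩
  simpa [mul_assoc] using hw n
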